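/- Let G be a finite group and A ≤ G a normal abelian subgroup of index d = [G : A] which can be generated by at most n elements. Then G contains a characteristic subgroup C with C ⊆ A (in particular C is abelian) and index [G : C] at most d^{d^{3n} · a_d}, where a_d denotes the number of isomorphism classes of abelian groups of order at most d. -/

import Mathlib

open Pointwise

lemma aux_finite_commGroup (α : Type*) [Finite α] : Finite (CommGroup α) := by
  have hinj : Function.Injective
      (fun c : CommGroup α => (fun x y => (letI := c; x * y) : α → α → α)) := by
    intro a b h
    exact CommGroup.ext h
  exact Finite.of_injective _ hinj

def finOneCommGroup : CommGroup (Fin 1) := Multiplicative.commGroup (α := Fin 1)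

lemma aux_card_closure_le {Q : Type*} [CommGroup Q] [Finite Q] (d : ℕ) (hd : 0 < d)
    (T : Finset Q) :
    (∀ x ∈ T, x ^ d = 1) → Nat.card (Subgroup.closure (T : Set Q)) ≤ d ^ T.card := by
  classical
  induction T using Finset.induction_on with
  | empty => intro _; simp [Subgroup.closure_empty]
  | @insert a T ha ih =>
    intro hT
    have h1 : Subgroup.closure ((insert a T : Finset Q) : Set Q)
        = Subgroup.zpowers a ⊔ Subgroup.closure (T : Set Q) := by
      rw [Finset.coe_insert, Set.insert_eq, Subgroup.closure_union,
        Subgroup.zpowers_eq_closure]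
    have h2 : Nat.card (Subgroup.zpowers a ⊔ Subgroup.closure (T : Set Q) : Subgroup Q)
        ≤ Nat.card (Subgroup.zpowers a) * Nat.card (Subgroup.closure (T : Set Q)) := by
      calc Nat.card (Subgroup.zpowers a ⊔ Subgroup.closure (T : Set Q) : Subgroup Q)
          = Nat.card ((↑(Subgroup.zpowers a ⊔ Subgroup.closure (T : Set Q)) : Set Q)) := rfl
        _ = Nat.card (((Subgroup.zpowers a : Set Q) * (Subgroup.closure (T : Set Q) : Set Q) : Set Q)) := by
            rw [Subgroup.mul_normal]
        _ ≤ _ := by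
            simpa using Set.natCard_mul_le (s := (Subgroup.zpowers a : Set Q))
              (t := (Subgroup.closure (T : Set Q) : Set Q))
    have horder : Nat.card (Subgroup.zpowers a) ≤ d := by
      rw [Nat.card_zpowers]
      exact Nat.le_of_dvd hd (orderOf_dvd_of_pow_eq_one (hT a (Finset.mem_insert_self a T)))
    have hrest := ih (fun x hx => hT x (Finset.mem_insert_of_mem hx))
    rw [h1, Finset.card_insert_of_notMem ha, pow_succ']
    exact h2.trans (Nat.mul_le_mul horder hrest)

lemma aux_closure_preimage {G : Type*} [Group G] {A : Subgroup G} {s : Set G}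
    (h : Subgroup.closure s = A) : Subgroup.closure (A.subtype ⁻¹' s) = ⊤ := by
  subst h; exact Subgroup.closure_preimage_eq_top s

/-- Isomorphism relation between abelian group structures on finite types of
order `1, …, d` (the type `Fin (m+1)` for `m : Fin d`). -/
def abGroupIsoRel (d : ℕ) (x y : (m : Fin d) × CommGroup (Fin ((m : ℕ) + 1))) : Prop :=
  letI := x.2
  letI := y.2
  Nonempty (Fin ((x.1 : ℕ) + 1) ≃* Fin ((y.1 : ℕ) + 1))

/-- `abGroupClassCount d` is the number of isomorphism classes of abelian groups of
order at most `d`. -/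
noncomputable def abGroupClassCount (d : ℕ) : ℕ := Nat.card (Quot (abGroupIsoRel d))

lemma abGroupClassCount_pos {d : ℕ} (hd : 0 < d) : 0 < abGroupClassCount d := by
  haveI : ∀ m : Fin d, Finite (CommGroup (Fin ((m : ℕ) + 1))) :=
    fun m => aux_finite_commGroup _
  haveI : Finite ((m : Fin d) × CommGroup (Fin ((m : ℕ) + 1))) := Finite.instSigma
  haveI : Nonempty (Quot (abGroupIsoRel d)) :=
    ⟨Quot.mk _ ⟨(⟨0, hd⟩ : Fin d), finOneCommGroup⟩⟩
  exact Nat.card_pos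

/-- if `G` is a finite group and `A ≤ G` is a normal abelian
subgroup of index `d` generated by at most `n` elements, then `G` has a
characteristic subgroup `C ⊆ A` of index at most `d ^ (d ^ (3n) * a_d)`. -/
theorem exists_characteristic_subgroup_le {G : Type*} [Group G] [Finite G]
    (A : Subgroup G) (hN : A.Normal) (hab : IsMulCommutative A) (n : ℕ)
    (hgen : ∃ S : Finset G, S.card ≤ n ∧ Subgroup.closure (S : Set G) = A) :
    ∃ C : Subgroup G, C.Characteristic ∧ C ≤ A ∧
      C.index ≤ A.index ^ (A.index ^ (3 * n) * abGroupClassCount A.index) := by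
  classical
  haveI := hab
  obtain ⟨S, hScard, hSclosure⟩ := hgen
  set d := A.index with hd
  have hd0 : d ≠ 0 := Subgroup.index_ne_zero_of_finite
  -- the subgroup generated by `d`-th powers of elements of `A`
  set D : Subgroup G := Subgroup.closure ((fun x : G => x ^ d) '' (A : Set G)) with hDdef
  have hDA : D ≤ A := by
    rw [hDdef, Subgroup.closure_le]
    rintro _ ⟨x, hx, rfl⟩
    exact pow_mem hx d
  have hDmap : ∀ φ : G ≃* G, D ≤ A.map φ.toMonoidHom := by
    intro φ
    haveI : (A.map φ.toMonoidHom).Normal := hN.map _ φ.surjective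
    have hidx : (A.map φ.toMonoidHom).index = d := by
      rw [Subgroup.index_map, (MonoidHom.ker_eq_bot_iff φ.toMonoidHom).mpr φ.injective,
        MonoidHom.range_eq_top.mpr φ.surjective, sup_bot_eq, Subgroup.index_top, mul_one]
    rw [hDdef, Subgroup.closure_le]
    rintro _ ⟨x, hx, rfl⟩
    have := (A.map φ.toMonoidHom).pow_index_mem x
    rwa [hidx] at this
  set C : Subgroup G := ⨅ φ : G ≃* G, A.map φ.toMonoidHom with hC
  have hCA : C ≤ A := by
    have h := iInf_le (fun φ : G ≃* G => A.map φ.toMonoidHom) (MulEquiv.refl G)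
    have h2 : A.map (MulEquiv.refl G).toMonoidHom = A := by
      ext x; simp [Subgroup.mem_map]
    rw [← h2]; exact h
  have hCchar : C.Characteristic := by
    rw [Subgroup.characteristic_iff_map_le]
    intro ψ
    refine le_iInf fun φ => ?_
    have h1 : C ≤ A.map (φ.trans ψ.symm).toMonoidHom := iInf_le _ _
    calc Subgroup.map ψ.toMonoidHom C
        ≤ Subgroup.map ψ.toMonoidHom (A.map (φ.trans ψ.symm).toMonoidHom) :=
          Subgroup.map_mono h1
      _ = A.map (ψ.toMonoidHom.comp (φ.trans ψ.symm).toMonoidHom) := Subgroup.map_map _ _ _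
      _ = A.map φ.toMonoidHom := by
          congr 1
          ext x
          simp
  have hDC : D ≤ C := le_iInf hDmap
  -- bound the index of D
  set D' : Subgroup A := D.subgroupOf A with hD'
  have hpowD' : ∀ a : A, a ^ d ∈ D' := by
    intro a
    have hmem : (a : G) ^ d ∈ D := by
      rw [hDdef]
      exact Subgroup.subset_closure ⟨(a : G), a.2, rfl⟩
    simpa [hD', Subgroup.mem_subgroupOf] using hmem
  have hpowQ : ∀ q : A ⧸ D', q ^ d = 1 := by
    intro q
    obtain ⟨a, rfl⟩ := QuotientGroup.mk_surjective q
    rw [← QuotientGroup.mk_pow]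
    exact (QuotientGroup.eq_one_iff _).mpr (hpowD' a)
  -- generation of the quotient
  have htop : Subgroup.closure (A.subtype ⁻¹' (S : Set G)) = (⊤ : Subgroup A) :=
    aux_closure_preimage hSclosure
  set T1 : Set (A ⧸ D') := QuotientGroup.mk '' (A.subtype ⁻¹' (S : Set G)) with hT1
  have hT1top : Subgroup.closure T1 = ⊤ := by
    rw [hT1, ← QuotientGroup.coe_mk' (N := D'), ← MonoidHom.map_closure, htop]
    exact Subgroup.map_top_of_surjective _ (QuotientGroup.mk'_surjective D')
  have hT1fin : T1.Finite := Set.toFinite _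
  have hT1card : hT1fin.toFinset.card ≤ n := by
    rw [← Set.ncard_eq_toFinset_card T1 hT1fin]
    calc T1.ncard ≤ (A.subtype ⁻¹' (S : Set G)).ncard := Set.ncard_image_le (Set.toFinite _)
      _ = (A.subtype '' (A.subtype ⁻¹' (S : Set G))).ncard :=
          (Set.ncard_image_of_injective _ A.subtype_injective).symm
      _ ≤ (S : Set G).ncard := Set.ncard_le_ncard (Set.image_preimage_subset _ _) (Set.toFinite _)
      _ = S.card := Set.ncard_coe_finset S
      _ ≤ n := hScard
  have hQcard : Nat.card (A ⧸ D') ≤ d ^ n := by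
    have h1 : Nat.card (A ⧸ D') = Nat.card (Subgroup.closure T1) := by
      rw [hT1top, Subgroup.card_top]
    open scoped IsMulCommutative in
    have h2 := aux_card_closure_le d (Nat.pos_of_ne_zero hd0) hT1fin.toFinset
      (fun x _ => hpowQ x)
    rw [Set.Finite.coe_toFinset] at h2
    calc Nat.card (A ⧸ D') = Nat.card (Subgroup.closure T1) := h1
      _ ≤ d ^ hT1fin.toFinset.card := h2
      _ ≤ d ^ n := Nat.pow_le_pow_right (Nat.pos_of_ne_zero hd0) hT1card
  -- index of D
  have hDidx : D.index ≤ d ^ (n + 1) := by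
    have h1 : D.relIndex A * A.index = D.index := Subgroup.relIndex_mul_index hDA
    have h2 : D.relIndex A ≤ d ^ n := by
      have : D.relIndex A = Nat.card (A ⧸ D') := Subgroup.index_eq_card D'
      rw [this]; exact hQcard
    calc D.index = D.relIndex A * A.index := h1.symm
      _ ≤ d ^ n * d := Nat.mul_le_mul h2 (le_of_eq hd.symm)
      _ = d ^ (n + 1) := (pow_succ d n).symm
  have hCidx : C.index ≤ d ^ (n + 1) := by
    refine le_trans (Nat.le_of_dvd ?_ (Subgroup.index_dvd_of_le hDC)) hDidx
    exact Nat.pos_of_ne_zero Subgroup.index_ne_zero_of_finite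
  refine ⟨C, hCchar, hCA, ?_⟩
  refine hCidx.trans ?_
  rcases Nat.lt_or_ge d 2 with hdlt | hdge
  · interval_cases d
    · exact absurd rfl hd0
    · simp
  · apply Nat.pow_le_pow_right (by omega)
    have h1 : n + 1 ≤ 2 ^ (3 * n) := by
      calc n + 1 ≤ 2 ^ n := Nat.succ_le_of_lt (Nat.lt_two_pow_self)
      _ ≤ 2 ^ (3 * n) := Nat.pow_le_pow_right (by norm_num) (by omega)
    calc n + 1 ≤ 2 ^ (3 * n) := h1
      _ ≤ d ^ (3 * n) := Nat.pow_le_pow_left hdge _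
      _ ≤ d ^ (3 * n) * abGroupClassCount d :=
          Nat.le_mul_of_pos_right _ (abGroupClassCount_pos (Nat.pos_of_ne_zero hd0))
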